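/- Suppose U = exp((S − iR)/σ²) with R, S real smooth functions solves (σ⁴/2)ΔU + VU = EU. Then the real function W = exp((S + R)/σ²) solves the modified equation (σ⁴/2)ΔW + (V − |∇R|²)W = EW. -/

import Mathlib

/-- Real partial derivative in the `i`-th coordinate. -/
noncomputable def pd {n : ℕ} (i : Fin n) (f : (Fin n → ℝ) → ℝ) (x : Fin n → ℝ) : ℝ :=
  deriv (fun s => f (Function.update x i s)) (x i)

/-- Complex-valued partial derivative in the `i`-th coordinate. -/
noncomputable def pdC {n : ℕ} (i : Fin n) (f : (Fin n → ℝ) → ℂ) (x : Fin n → ℝ) : ℂ :=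
  deriv (fun s => f (Function.update x i s)) (x i)

section aux

lemma pd_second {n : ℕ} (i : Fin n) (f : (Fin n → ℝ) → ℝ) (x : Fin n → ℝ) :
    pd i (fun y => pd i f y) x
      = deriv (deriv (fun s => f (Function.update x i s))) (x i) := by
  unfold pd
  congr 1
  funext s
  simp [Function.update_idem]

lemma pdC_second {n : ℕ} (i : Fin n) (f : (Fin n → ℝ) → ℂ) (x : Fin n → ℝ) :
    pdC i (fun y => pdC i f y) x
      = deriv (deriv (fun s => f (Function.update x i s))) (x i) := by
  unfold pdC
  congr 1
  funext s
  simp [Function.update_idem]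

lemma real_exp_second_deriv (σ : ℝ) (hσ : σ ≠ 0) (g h : ℝ → ℝ)
    (hg : ContDiff ℝ (⊤ : ℕ∞) g) (hh : ContDiff ℝ (⊤ : ℕ∞) h) (s : ℝ) :
    deriv (deriv (fun t => Real.exp ((g t + h t) / σ ^ 2))) s
      = Real.exp ((g s + h s) / σ ^ 2) *
        (((deriv g s + deriv h s) / σ ^ 2) ^ 2
          + (deriv (deriv g) s + deriv (deriv h) s) / σ ^ 2) := by
  have hgd : Differentiable ℝ g := hg.differentiable (by simp)
  have hhd : Differentiable ℝ h := hh.differentiable (by simp)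
  have hgd' : Differentiable ℝ (deriv g) :=
    ((contDiff_infty_iff_deriv.mp hg).2).differentiable (by simp)
  have hhd' : Differentiable ℝ (deriv h) :=
    ((contDiff_infty_iff_deriv.mp hh).2).differentiable (by simp)
  have h1 : deriv (fun t => Real.exp ((g t + h t) / σ ^ 2))
      = fun t => Real.exp ((g t + h t) / σ ^ 2) * ((deriv g t + deriv h t) / σ ^ 2) := by
    funext t
    exact ((((hgd t).hasDerivAt.add (hhd t).hasDerivAt).div_const (σ ^ 2)).exp).deriv
  rw [h1]
  have h2 : HasDerivAt (fun t => Real.exp ((g t + h t) / σ ^ 2) * ((deriv g t + deriv h t) / σ ^ 2))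
      (Real.exp ((g s + h s) / σ ^ 2) * ((deriv g s + deriv h s) / σ ^ 2) *
          ((deriv g s + deriv h s) / σ ^ 2)
        + Real.exp ((g s + h s) / σ ^ 2) *
          ((deriv (deriv g) s + deriv (deriv h) s) / σ ^ 2)) s := by
    exact ((((hgd s).hasDerivAt.add (hhd s).hasDerivAt).div_const (σ ^ 2)).exp).mul
      (((hgd' s).hasDerivAt.add (hhd' s).hasDerivAt).div_const (σ ^ 2))
  rw [h2.deriv]
  ring

lemma complex_exp_second_deriv (σ : ℝ) (hσ : σ ≠ 0) (g h : ℝ → ℝ)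
    (hg : ContDiff ℝ (⊤ : ℕ∞) g) (hh : ContDiff ℝ (⊤ : ℕ∞) h) (s : ℝ) :
    deriv (deriv (fun t => Complex.exp
        ((Complex.ofReal (g t) - Complex.ofReal (h t) * Complex.I) / (σ : ℂ) ^ 2))) s
      = Complex.exp ((Complex.ofReal (g s) - Complex.ofReal (h s) * Complex.I) / (σ : ℂ) ^ 2) *
        (((Complex.ofReal (deriv g s) - Complex.ofReal (deriv h s) * Complex.I) / (σ : ℂ) ^ 2) ^ 2
          + (Complex.ofReal (deriv (deriv g) s)
              - Complex.ofReal (deriv (deriv h) s) * Complex.I) / (σ : ℂ) ^ 2) := by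
  have hgd : Differentiable ℝ g := hg.differentiable (by simp)
  have hhd : Differentiable ℝ h := hh.differentiable (by simp)
  have hgd' : Differentiable ℝ (deriv g) :=
    ((contDiff_infty_iff_deriv.mp hg).2).differentiable (by simp)
  have hhd' : Differentiable ℝ (deriv h) :=
    ((contDiff_infty_iff_deriv.mp hh).2).differentiable (by simp)
  have inner : ∀ t : ℝ, HasDerivAt
      (fun t => (Complex.ofReal (g t) - Complex.ofReal (h t) * Complex.I) / (σ : ℂ) ^ 2)
      ((Complex.ofReal (deriv g t) - Complex.ofReal (deriv h t) * Complex.I) / (σ : ℂ) ^ 2) t := by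
    intro t
    exact (((hgd t).hasDerivAt.ofReal_comp.sub
      ((hhd t).hasDerivAt.ofReal_comp.mul_const Complex.I)).div_const ((σ : ℂ) ^ 2))
  have inner' : ∀ t : ℝ, HasDerivAt
      (fun t => (Complex.ofReal (deriv g t) - Complex.ofReal (deriv h t) * Complex.I) / (σ : ℂ) ^ 2)
      ((Complex.ofReal (deriv (deriv g) t)
        - Complex.ofReal (deriv (deriv h) t) * Complex.I) / (σ : ℂ) ^ 2) t := by
    intro t
    exact (((hgd' t).hasDerivAt.ofReal_comp.sub
      ((hhd' t).hasDerivAt.ofReal_comp.mul_const Complex.I)).div_const ((σ : ℂ) ^ 2))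
  have h1 : deriv (fun t => Complex.exp
        ((Complex.ofReal (g t) - Complex.ofReal (h t) * Complex.I) / (σ : ℂ) ^ 2))
      = fun t => Complex.exp
          ((Complex.ofReal (g t) - Complex.ofReal (h t) * Complex.I) / (σ : ℂ) ^ 2) *
          ((Complex.ofReal (deriv g t) - Complex.ofReal (deriv h t) * Complex.I) / (σ : ℂ) ^ 2) := by
    funext t
    exact ((inner t).cexp).deriv
  rw [h1]
  have h2 : HasDerivAt (fun t => Complex.exp
            ((Complex.ofReal (g t) - Complex.ofReal (h t) * Complex.I) / (σ : ℂ) ^ 2) *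
            ((Complex.ofReal (deriv g t) - Complex.ofReal (deriv h t) * Complex.I) / (σ : ℂ) ^ 2)) _ s :=
    (((inner s).cexp).mul (inner' s))
  rw [h2.deriv]
  ring

lemma reim_helper (X Y Z : ℝ) (h : (X:ℂ) + (Y:ℂ)*(-Complex.I) = (Z:ℂ)) : X = Z ∧ Y = 0 := by
  simp [Complex.ext_iff] at h
  exact ⟨h.1, h.2⟩

end aux

theorem stmt_17 (n : ℕ) (σ : ℝ) (hσ : σ ≠ 0)
    (R S V : (Fin n → ℝ) → ℝ) (E : ℝ)
    (hR : ContDiff ℝ (⊤ : ℕ∞) R) (hS : ContDiff ℝ (⊤ : ℕ∞) S)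
    (U : (Fin n → ℝ) → ℂ)
    (hU : ∀ x, U x = Complex.exp (((S x : ℂ) - (R x : ℂ) * Complex.I) / (σ : ℂ) ^ 2))
    (hheat : ∀ x, ((σ : ℂ) ^ 4 / 2) * (∑ i, pdC i (fun y => pdC i U y) x)
        + (V x : ℂ) * U x = (E : ℂ) * U x)
    (W : (Fin n → ℝ) → ℝ)
    (hW : ∀ x, W x = Real.exp ((S x + R x) / σ ^ 2)) :
    ∀ x, (σ ^ 4 / 2) * (∑ i, pd i (fun y => pd i W y) x)
        + (V x - (∑ i, (pd i R x) ^ 2)) * W x = E * W x := by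
  intro x
  have hR' : ContDiff ℝ (⊤ : ℕ∞) R := hR.of_le (by simp)
  have hS' : ContDiff ℝ (⊤ : ℕ∞) S := hS.of_le (by simp)
  have hσ2 : (σ : ℂ) ^ 2 ≠ 0 := pow_ne_zero _ (by exact_mod_cast hσ)
  set L : Fin n → ℝ → (Fin n → ℝ) := fun i s => Function.update x i s with hL
  have hLsmooth : ∀ i, ContDiff ℝ (⊤ : ℕ∞) (L i) := fun i => contDiff_update _ x i
  set a : Fin n → ℝ := fun i => pd i S x with ha
  set b : Fin n → ℝ := fun i => pd i R x with hb
  set p : Fin n → ℝ := fun i => pd i (fun y => pd i S y) x with hp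
  set q : Fin n → ℝ := fun i => pd i (fun y => pd i R y) x with hq
  have haf : ∀ i, a i = deriv (fun s => S (L i s)) (x i) := fun i => rfl
  have hbf : ∀ i, b i = deriv (fun s => R (L i s)) (x i) := fun i => rfl
  have hpf : ∀ i, p i = deriv (deriv (fun s => S (L i s))) (x i) := fun i => pd_second i S x
  have hqf : ∀ i, q i = deriv (deriv (fun s => R (L i s))) (x i) := fun i => pd_second i R x
  have hUform : ∀ i, pdC i (fun y => pdC i U y) x
      = U x * ((((a i : ℂ) - (b i : ℂ) * Complex.I) / (σ : ℂ) ^ 2) ^ 2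
          + ((p i : ℂ) - (q i : ℂ) * Complex.I) / (σ : ℂ) ^ 2) := by
    intro i
    rw [pdC_second]
    have hfun : (fun s => U (Function.update x i s))
        = fun s => Complex.exp ((Complex.ofReal (S (L i s))
            - Complex.ofReal (R (L i s)) * Complex.I) / (σ : ℂ) ^ 2) := by
      funext s; rw [hU]
    rw [hfun, complex_exp_second_deriv σ hσ (fun s => S (L i s)) (fun s => R (L i s))
      (hS'.comp (hLsmooth i)) (hR'.comp (hLsmooth i)) (x i)]
    rw [hU x, haf i, hbf i, hpf i, hqf i]
    simp [hL, Function.update_eq_self]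
  have hWform : ∀ i, pd i (fun y => pd i W y) x
      = W x * (((a i + b i) / σ ^ 2) ^ 2 + (p i + q i) / σ ^ 2) := by
    intro i
    rw [pd_second]
    have hfun : (fun s => W (Function.update x i s))
        = fun s => Real.exp ((S (L i s) + R (L i s)) / σ ^ 2) := by
      funext s; rw [hW]
    rw [hfun, real_exp_second_deriv σ hσ (fun s => S (L i s)) (fun s => R (L i s))
      (hS'.comp (hLsmooth i)) (hR'.comp (hLsmooth i)) (x i)]
    rw [hW x, haf i, hbf i, hpf i, hqf i]
    simp [hL, Function.update_eq_self]
  have hUne : U x ≠ 0 := by rw [hU]; exact Complex.exp_ne_zero _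
  have key : (σ : ℂ) ^ 4 / 2 * (∑ i, ((((a i : ℂ) - (b i : ℂ) * Complex.I) / (σ : ℂ) ^ 2) ^ 2
      + ((p i : ℂ) - (q i : ℂ) * Complex.I) / (σ : ℂ) ^ 2)) + (V x : ℂ) = (E : ℂ) := by
    have h0 := hheat x
    rw [Finset.sum_congr rfl (fun i _ => hUform i), ← Finset.mul_sum] at h0
    apply mul_right_cancel₀ hUne
    linear_combination h0
  have key2 : (∑ i, (((a i : ℂ) - (b i : ℂ) * Complex.I) ^ 2
      + (σ : ℂ) ^ 2 * (((p i : ℂ)) - (q i : ℂ) * Complex.I)))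
      = 2 * ((E : ℂ) - (V x : ℂ)) := by
    have e1 : ∀ i : Fin n, (((a i : ℂ) - (b i : ℂ) * Complex.I) ^ 2
        + (σ : ℂ) ^ 2 * (((p i : ℂ)) - (q i : ℂ) * Complex.I))
        = (σ : ℂ) ^ 4 * ((((a i : ℂ) - (b i : ℂ) * Complex.I) / (σ : ℂ) ^ 2) ^ 2
          + ((p i : ℂ) - (q i : ℂ) * Complex.I) / (σ : ℂ) ^ 2) := by
      intro i; have hσc : (σ : ℂ) ≠ 0 := by exact_mod_cast hσ
      field_simp
    rw [Finset.sum_congr rfl (fun i _ => e1 i), ← Finset.mul_sum]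
    linear_combination 2 * key
  have key3 : ((∑ i, (a i ^ 2 - b i ^ 2 + σ ^ 2 * p i) : ℝ) : ℂ)
      + ((∑ i, (2 * a i * b i + σ ^ 2 * q i) : ℝ) : ℂ) * (-Complex.I)
      = ((2 * (E - V x) : ℝ) : ℂ) := by
    rw [show ((2 * (E - V x) : ℝ) : ℂ) = 2 * ((E : ℂ) - (V x : ℂ)) by push_cast; ring, ← key2]
    push_cast
    rw [Finset.sum_mul, ← Finset.sum_add_distrib]
    refine Finset.sum_congr rfl (fun i _ => ?_)
    linear_combination (-(b i : ℂ) ^ 2) * Complex.I_sq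
  have hkey3 := reim_helper _ _ _ key3
  have hre : (∑ i, (a i ^ 2 - b i ^ 2 + σ ^ 2 * p i)) = 2 * (E - V x) := hkey3.1
  have him : (∑ i, (2 * a i * b i + σ ^ 2 * q i)) = 0 := hkey3.2
  rw [Finset.sum_congr rfl (fun i _ => hWform i), ← Finset.mul_sum]
  have hsum : (∑ i, (((a i + b i) / σ ^ 2) ^ 2 + (p i + q i) / σ ^ 2))
      = ((∑ i, (a i ^ 2 - b i ^ 2 + σ ^ 2 * p i))
        + (∑ i, (2 * a i * b i + σ ^ 2 * q i))
        + 2 * (∑ i, (b i) ^ 2)) / σ ^ 4 := by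
    rw [Finset.mul_sum, ← Finset.sum_add_distrib, ← Finset.sum_add_distrib, Finset.sum_div]
    refine Finset.sum_congr rfl (fun i _ => ?_)
    field_simp
    ring
  rw [hsum, hre, him]
  have hσ4 : σ ^ 4 ≠ 0 := pow_ne_zero _ hσ
  field_simp
  ring
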